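/- Let N ≥ 1, 1 ≤ d ≤ N, and for A ∈ Matrix (Fin N) (Fin N) ℂ let M_d be the d×d submatrix of A formed by rows N−d+1,…,N and columns 1,…,d (the lower-left corner). Then for any matrix G ∈ Matrix (Fin N) (Fin N) ℂ and any indices k, l: Σ_{r=N−d+1}^{N} Σ_{s=1}^{d} adj(M_d)_{s̄,r̄} · [ (sgn(r−k)−1)·A_{k,s}·G_{r,l} + (sgn(s−l)+1)·G_{k,s}·A_{r,l} + (sgn(s−k)+1)·A_{r,k}·G_{s,l} + (sgn(r−l)−1)·A_{l,s}·G_{k,r} ] = c^d_{k,l} · G_{k,l} · det(M_d), where r̄ = r−(N−d) and s̄ = s are the indices of (r,s) inside M_d, adj is the adjugate, and c^d_{k,l} = −[k+d>N] + [d+1>l] + [d+1>k] − [l+d>N] with [·] the Iverson bracket. In particular (taking G = A) the bracket {det M_d, A_{k,l}} equals c^d_{k,l}·A_{k,l}·det M_d. -/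

import Mathlib

/-!
Each of the four summands of the bracket is a cofactor expansion of the corner minor
`M = M_d` along a single row or column: a summand with a factor `A_{k,s}` (or `A_{l,s}`)
is an expansion along row `k` of `M`, one with a factor `A_{r,l}` (or `A_{r,k}`) along
column `l`. When the index is a row (resp. column) of the corner, `adj M * M = M * adj M =
det M • 1` collapses the double sum to the sign coefficient at the diagonal, where
`sgn 0 = 0`, giving `∓ G_{k,l} det M`. When it is not, the index lies strictly above all
corner rows (resp. to the right of all corner columns), so the sign coefficient
`sgn(r - k) - 1` (resp. `sgn(s - l) + 1`) vanishes identically. The four cases give the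
four Iverson brackets of `c^d_{k,l}`.
-/

open Matrix

noncomputable section

/-- The sign of the difference of two indices, as a complex number
(`sgn : ℤ → ℤ` with `sgn 0 = 0`). -/
def fsgn {N : ℕ} (a b : Fin N) : ℂ := ((((a : ℕ) : ℤ) - ((b : ℕ) : ℤ)).sign : ℤ)

/-- Global row index in `A` of the `r`-th row of the `e × e` lower-left corner minor
(rows `N−e+1,…,N` in 1-based indexing). -/
def cornerRow (N e : ℕ) (he : e ≤ N) (r : Fin e) : Fin N :=
  ⟨N - e + r.val, by have := r.isLt; omega⟩

/-- Global column index in `A` of the `s`-th column of the `e × e` lower-left corner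
minor (columns `1,…,e`). -/
def cornerCol (N e : ℕ) (he : e ≤ N) (s : Fin e) : Fin N :=
  ⟨s.val, by have := s.isLt; omega⟩

/-- The `e × e` lower-left corner submatrix `M_e` of `A`. -/
def corner (N e : ℕ) (he : e ≤ N) (A : Matrix (Fin N) (Fin N) ℂ) :
    Matrix (Fin e) (Fin e) ℂ :=
  fun r s => A (cornerRow N e he r) (cornerCol N e he s)

/-- The mixed bracket `{A_{r,s}, G^{(p)}_{k,l}}` of the affine algebra between a
zero-level entry and a level-`p` entry. -/
def mixedBr {N : ℕ} (A G : Matrix (Fin N) (Fin N) ℂ) (r s k l : Fin N) : ℂ :=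
  (fsgn r k - 1) * A k s * G r l + (fsgn s l + 1) * G k s * A r l
    + (fsgn s k + 1) * A r k * G s l + (fsgn r l - 1) * A l s * G k r

/-- The coefficient `c^d_{k,l} = −[k+d>N] + [d+1>l] + [d+1>k] − [l+d>N]` (1-based
Iverson brackets; here `k l : Fin N` are 0-based). -/
def cCoef (N d : ℕ) (k l : Fin N) : ℤ :=
  -(if (k : ℕ) + d ≥ N then 1 else 0) + (if (l : ℕ) < d then 1 else 0)
    + (if (k : ℕ) < d then 1 else 0) - (if (l : ℕ) + d ≥ N then 1 else 0)

namespace Matrix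

variable {n R : Type*} [Fintype n] [DecidableEq n] [CommRing R]

theorem sum_sum_adjugate_mul_row (M : Matrix n n R) (c : n → R) (i : n) :
    ∑ r, ∑ s, M.adjugate s r * (c r * M i s) = c i * M.det := by
  have hrow : ∀ r, ∑ s, M.adjugate s r * (c r * M i s) = c r * (M * M.adjugate) i r := by
    intro r
    rw [mul_apply, Finset.mul_sum]
    exact Finset.sum_congr rfl fun s _ => by ring
  simp_rw [hrow, mul_adjugate, Matrix.smul_apply, one_apply]
  simp

theorem sum_sum_adjugate_mul_col (M : Matrix n n R) (c : n → R) (j : n) :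
    ∑ r, ∑ s, M.adjugate s r * (c s * M r j) = c j * M.det := by
  have hcol : ∀ s, ∑ r, M.adjugate s r * (c s * M r j) = c s * (M.adjugate * M) s j := by
    intro s
    rw [mul_apply, Finset.mul_sum]
    exact Finset.sum_congr rfl fun r _ => by ring
  rw [Finset.sum_comm]
  simp_rw [hcol, adjugate_mul, Matrix.smul_apply, one_apply]
  simp

end Matrix

section Corner

variable {N d : ℕ}

theorem fsgn_self (a : Fin N) : fsgn a a = 0 := by simp [fsgn]

theorem fsgn_eq_neg_one_of_lt {a b : Fin N} (h : a < b) : fsgn a b = -1 := by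
  have : ((a : ℕ) : ℤ) - (b : ℕ) < 0 := by omega
  simp [fsgn, Int.sign_eq_neg_one_of_neg this]

theorem fsgn_eq_one_of_lt {a b : Fin N} (h : b < a) : fsgn a b = 1 := by
  have : 0 < ((a : ℕ) : ℤ) - (b : ℕ) := by omega
  simp [fsgn, Int.sign_eq_one_of_pos this]

theorem exists_cornerRow_eq (hd : d ≤ N) {k : Fin N} (hk : N ≤ (k : ℕ) + d) :
    ∃ k', cornerRow N d hd k' = k :=
  ⟨⟨k - (N - d), by omega⟩, Fin.ext (by simp only [cornerRow]; omega)⟩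

theorem cornerCol_mk (hd : d ≤ N) {l : Fin N} (hl : (l : ℕ) < d) :
    cornerCol N d hd ⟨l, hl⟩ = l :=
  rfl

theorem sum_sum_adjugate_corner_mul_row (hd : d ≤ N) (A : Matrix (Fin N) (Fin N) ℂ)
    (g : Fin N → ℂ) (k : Fin N) :
    ∑ r, ∑ s, (corner N d hd A).adjugate s r *
        ((fsgn (cornerRow N d hd r) k - 1) * g (cornerRow N d hd r) * A k (cornerCol N d hd s))
      = (if N ≤ (k : ℕ) + d then -1 else 0) * g k * (corner N d hd A).det := by
  split_ifs with hk
  · obtain ⟨k', rfl⟩ := exists_cornerRow_eq hd hk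
    refine (sum_sum_adjugate_mul_row (corner N d hd A) _ k').trans ?_
    rw [fsgn_self]
    ring
  · have hsgn : ∀ r, fsgn (cornerRow N d hd r) k = 1 := fun r =>
      fsgn_eq_one_of_lt (by simp only [Fin.lt_def, cornerRow]; omega)
    simp [hsgn]

theorem sum_sum_adjugate_corner_mul_col (hd : d ≤ N) (A : Matrix (Fin N) (Fin N) ℂ)
    (g : Fin N → ℂ) (l : Fin N) :
    ∑ r, ∑ s, (corner N d hd A).adjugate s r *
        ((fsgn (cornerCol N d hd s) l + 1) * g (cornerCol N d hd s) * A (cornerRow N d hd r) l)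
      = (if (l : ℕ) < d then 1 else 0) * g l * (corner N d hd A).det := by
  split_ifs with hl
  · rw [← cornerCol_mk hd hl]
    refine (sum_sum_adjugate_mul_col (corner N d hd A) _ ⟨l, hl⟩).trans ?_
    rw [fsgn_self]
    ring
  · have hsgn : ∀ s, fsgn (cornerCol N d hd s) l = -1 := fun s =>
      fsgn_eq_neg_one_of_lt (by simp only [Fin.lt_def, cornerCol]; omega)
    simp [hsgn]

end Corner

theorem corner_minor_bracket_general (N d : ℕ) (hd2 : d ≤ N)
    (A G : Matrix (Fin N) (Fin N) ℂ) (k l : Fin N) :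
    ∑ r : Fin d, ∑ s : Fin d,
        (corner N d hd2 A).adjugate s r *
          mixedBr A G (cornerRow N d hd2 r) (cornerCol N d hd2 s) k l
      = (cCoef N d k l : ℂ) * G k l * (corner N d hd2 A).det := by
  set M := corner N d hd2 A
  set R := cornerRow N d hd2
  set C := cornerCol N d hd2
  have expand : ∀ r s, M.adjugate s r * mixedBr A G (R r) (C s) k l
      = M.adjugate s r * ((fsgn (R r) k - 1) * G (R r) l * A k (C s))
        + M.adjugate s r * ((fsgn (C s) l + 1) * G k (C s) * A (R r) l)
        + M.adjugate s r * ((fsgn (C s) k + 1) * G (C s) l * A (R r) k)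
        + M.adjugate s r * ((fsgn (R r) l - 1) * G k (R r) * A l (C s)) := by
    intro r s
    simp only [mixedBr]
    ring
  simp only [expand, Finset.sum_add_distrib]
  rw [sum_sum_adjugate_corner_mul_row hd2 A (G · l) k,
    sum_sum_adjugate_corner_mul_col hd2 A (G k ·) l,
    sum_sum_adjugate_corner_mul_col hd2 A (G · l) k,
    sum_sum_adjugate_corner_mul_row hd2 A (G k ·) l]
  simp only [cCoef, ge_iff_le]
  push_cast
  split_ifs <;> ring

/-- the bracket of the lower-left corner minor `det M_d` with any entry,
computed by the Leibniz rule via the cofactors `adj(M_d)_{s̄,r̄} = ∂det M_d/∂A_{r,s}`,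
equals `c^d_{k,l} · G_{k,l} · det M_d`. -/
theorem corner_minor_bracket (N d : ℕ) (hd1 : 1 ≤ d) (hd2 : d ≤ N)
    (A G : Matrix (Fin N) (Fin N) ℂ) (k l : Fin N) :
    ∑ r : Fin d, ∑ s : Fin d,
        (corner N d hd2 A).adjugate s r *
          mixedBr A G (cornerRow N d hd2 r) (cornerCol N d hd2 s) k l
      = (cCoef N d k l : ℂ) * G k l * (corner N d hd2 A).det :=
  corner_minor_bracket_general N d hd2 A G k l
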